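/- arXiv:2203.07335 — 3 statements merged into one kernel-verified Lean document; each statement's English description precedes it below -/
import Mathlib

section
/- Let G = Θ_{p,q,r} with p ≤ q ≤ r, where p, q and r are all even and q ∉ {p, p+2}. Then the set S = {v₁, w_{r/2}} is a vertex metric generator of G. -/
/-- Vertices of the Θ-graph `Θ_{p,q,r}`: the two branching vertices `u` and `v`,
together with the internal vertices of the three `u`–`v` paths of lengths `p`, `q`, `r`.
`a i` is the internal vertex `u_{i+1}` of the first path, `b i` is `v_{i+1}` of the
second path, and `c i` is `w_{i+1}` of the third path. -/
inductive ThetaVert (p q r : ℕ) : Type where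
  | u : ThetaVert p q r
  | v : ThetaVert p q r
  | a : Fin (p - 1) → ThetaVert p q r
  | b : Fin (q - 1) → ThetaVert p q r
  | c : Fin (r - 1) → ThetaVert p q r
  deriving DecidableEq

/-- Base adjacency relation for the Θ-graph (one direction of each edge). -/
def thetaRel (p q r : ℕ) : ThetaVert p q r → ThetaVert p q r → Prop
  | .u, .v => p = 1 ∨ q = 1 ∨ r = 1
  | .u, .a i => (i : ℕ) = 0
  | .u, .b i => (i : ℕ) = 0
  | .u, .c i => (i : ℕ) = 0
  | .a i, .v => (i : ℕ) = p - 2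
  | .b i, .v => (i : ℕ) = q - 2
  | .c i, .v => (i : ℕ) = r - 2
  | .a i, .a j => (j : ℕ) = (i : ℕ) + 1
  | .b i, .b j => (j : ℕ) = (i : ℕ) + 1
  | .c i, .c j => (j : ℕ) = (i : ℕ) + 1
  | _, _ => False

/-- The Θ-graph `Θ_{p,q,r}`. -/
def thetaGraph (p q r : ℕ) : SimpleGraph (ThetaVert p q r) :=
  SimpleGraph.fromRel (thetaRel p q r)

/-- The vertex `u_i` (for `0 ≤ i ≤ p`) on the first path of `Θ_{p,q,r}`. -/
def uV (p q r : ℕ) (i : ℕ) : ThetaVert p q r :=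
  if h : 0 < i ∧ i < p then ThetaVert.a ⟨i - 1, by omega⟩
  else if i = 0 then ThetaVert.u else ThetaVert.v

/-- The vertex `v_i` (for `0 ≤ i ≤ q`) on the second path of `Θ_{p,q,r}`. -/
def vV (p q r : ℕ) (i : ℕ) : ThetaVert p q r :=
  if h : 0 < i ∧ i < q then ThetaVert.b ⟨i - 1, by omega⟩
  else if i = 0 then ThetaVert.u else ThetaVert.v

/-- The vertex `w_i` (for `0 ≤ i ≤ r`) on the third path of `Θ_{p,q,r}`. -/
def wV (p q r : ℕ) (i : ℕ) : ThetaVert p q r :=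
  if h : 0 < i ∧ i < r then ThetaVert.c ⟨i - 1, by omega⟩
  else if i = 0 then ThetaVert.u else ThetaVert.v

/-- `S` is a vertex metric generator of `G`: every pair of distinct vertices is
distinguished by some vertex of `S`. -/
def IsVertexMetricGenerator {V : Type*} (G : SimpleGraph V) (S : Set V) : Prop :=
  ∀ x x' : V, x ≠ x' → ∃ s ∈ S, G.dist s x ≠ G.dist s x'

/-- The vertex metric dimension of `G`: the least cardinality of a vertex metric generator. -/
noncomputable def vertexMetricDim {V : Type*} (G : SimpleGraph V) : ℕ :=
  sInf {n : ℕ | ∃ S : Finset V, S.card = n ∧ IsVertexMetricGenerator G ↑S}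

/-- Distance from a vertex `x` to an edge `e`: the minimum of the distances to its endpoints. -/
noncomputable def edgeDist {V : Type*} (G : SimpleGraph V) (x : V) (e : Sym2 V) : ℕ :=
  Sym2.lift ⟨fun y z => min (G.dist x y) (G.dist x z), fun _ _ => min_comm _ _⟩ e

/-- `S` is an edge metric generator of `G`: every pair of distinct edges is
distinguished by some vertex of `S`. -/
def IsEdgeMetricGenerator {V : Type*} (G : SimpleGraph V) (S : Set V) : Prop :=
  ∀ e ∈ G.edgeSet, ∀ f ∈ G.edgeSet, e ≠ f → ∃ s ∈ S, edgeDist G s e ≠ edgeDist G s f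

/-- The edge metric dimension of `G`: the least cardinality of an edge metric generator. -/
noncomputable def edgeMetricDim {V : Type*} (G : SimpleGraph V) : ℕ :=
  sInf {n : ℕ | ∃ S : Finset V, S.card = n ∧ IsEdgeMetricGenerator G ↑S}


namespace ThetaAux
open SimpleGraph

/-- Predicted distance from `v₁` in `Θ_{p,q,r}` (valid when `2 ≤ p`, `p+4 ≤ q ≤ r`). -/
def f1 (p q r : ℕ) : ThetaVert p q r → ℕ
  | .u => 1
  | .v => p + 1
  | .a i => (i : ℕ) + 2
  | .b i => min (i : ℕ) (p + q - (i : ℕ))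
  | .c i => min ((i : ℕ) + 2) (r - (i : ℕ) + p)

/-- Predicted distance from `w_{r/2}`. -/
def f2 (p q r : ℕ) : ThetaVert p q r → ℕ
  | .u => r / 2
  | .v => r - r / 2
  | .a i => min ((i : ℕ) + 1) (p - 1 - (i : ℕ)) + r / 2
  | .b i => min ((i : ℕ) + 1) (q - 1 - (i : ℕ)) + r / 2
  | .c i => ((i : ℕ) + 1 - r / 2) + (r / 2 - ((i : ℕ) + 1))

variable {p q r : ℕ}

lemma lip_f1 (h2 : 2 ≤ p) (h4 : p + 4 ≤ q) (hqr : q ≤ r) :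
    ∀ a b : ThetaVert p q r, (thetaGraph p q r).Adj a b → f1 p q r b ≤ f1 p q r a + 1 := by
  intro a b hab
  rw [thetaGraph, SimpleGraph.fromRel_adj] at hab
  obtain ⟨hne, hrel⟩ := hab
  rcases a with _ | _ | ⟨i, hi⟩ | ⟨i, hi⟩ | ⟨i, hi⟩ <;>
    rcases b with _ | _ | ⟨j, hj⟩ | ⟨j, hj⟩ | ⟨j, hj⟩ <;>
    simp only [thetaRel, f1, Fin.val_mk, or_self, or_false, false_or] at hrel ⊢ <;>
    omega

lemma lip_f2 (h2 : 2 ≤ p) (h4 : p + 4 ≤ q) (hqr : q ≤ r) :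
    ∀ a b : ThetaVert p q r, (thetaGraph p q r).Adj a b → f2 p q r b ≤ f2 p q r a + 1 := by
  intro a b hab
  rw [thetaGraph, SimpleGraph.fromRel_adj] at hab
  obtain ⟨hne, hrel⟩ := hab
  rcases a with _ | _ | ⟨i, hi⟩ | ⟨i, hi⟩ | ⟨i, hi⟩ <;>
    rcases b with _ | _ | ⟨j, hj⟩ | ⟨j, hj⟩ | ⟨j, hj⟩ <;>
    simp only [thetaRel, f2, Fin.val_mk, or_self, or_false, false_or] at hrel ⊢ <;>
    omega

lemma le_length_of_walk {V : Type*} {G : SimpleGraph V} {f : V → ℕ}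
    (hf : ∀ a b, G.Adj a b → f b ≤ f a + 1) :
    ∀ {s x : V} (W : G.Walk s x), f x ≤ f s + W.length := by
  intro s x W
  induction W with
  | nil => simp
  | cons huv W ih =>
    have := hf _ _ huv
    simp only [SimpleGraph.Walk.length_cons]
    omega

lemma f_le_dist {V : Type*} {G : SimpleGraph V} {f : V → ℕ} {s x : V}
    (hf : ∀ a b, G.Adj a b → f b ≤ f a + 1) (h0 : f s = 0) (hr : G.Reachable s x) :
    f x ≤ G.dist s x := by
  obtain ⟨W, hW⟩ := hr.exists_walk_length_eq_dist
  have := le_length_of_walk hf W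
  omega

/-! Path position lemmas. -/

lemma uV_zero : uV p q r 0 = ThetaVert.u := by simp [uV]

lemma uV_last (hp : 1 ≤ p) : uV p q r p = ThetaVert.v := by
  unfold uV; rw [dif_neg (by omega), if_neg (by omega)]

lemma uV_a (i : Fin (p - 1)) : uV p q r ((i : ℕ) + 1) = ThetaVert.a i := by
  unfold uV
  have hi := i.isLt
  rw [dif_pos ⟨by omega, by omega⟩]
  exact congrArg _ (Fin.ext (by simp))

lemma vV_zero : vV p q r 0 = ThetaVert.u := by simp [vV]

lemma vV_last (hq : 1 ≤ q) : vV p q r q = ThetaVert.v := by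
  unfold vV; rw [dif_neg (by omega), if_neg (by omega)]

lemma vV_b (i : Fin (q - 1)) : vV p q r ((i : ℕ) + 1) = ThetaVert.b i := by
  unfold vV
  have hi := i.isLt
  rw [dif_pos ⟨by omega, by omega⟩]
  exact congrArg _ (Fin.ext (by simp))

lemma wV_zero : wV p q r 0 = ThetaVert.u := by simp [wV]

lemma wV_last (hr : 1 ≤ r) : wV p q r r = ThetaVert.v := by
  unfold wV; rw [dif_neg (by omega), if_neg (by omega)]

lemma wV_c (i : Fin (r - 1)) : wV p q r ((i : ℕ) + 1) = ThetaVert.c i := by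
  unfold wV
  have hi := i.isLt
  rw [dif_pos ⟨by omega, by omega⟩]
  exact congrArg _ (Fin.ext (by simp))

/-! Adjacency along the three paths. -/

lemma adj_uV {i : ℕ} (hi : i < p) :
    (thetaGraph p q r).Adj (uV p q r i) (uV p q r (i + 1)) := by
  rw [thetaGraph, SimpleGraph.fromRel_adj]
  unfold uV
  split_ifs <;>
    refine ⟨?_, Or.inl ?_⟩ <;>
    simp [thetaRel, Fin.ext_iff] <;>
    first
    | exact False.elim ‹False›
    | omega

lemma adj_vV {i : ℕ} (hi : i < q) :
    (thetaGraph p q r).Adj (vV p q r i) (vV p q r (i + 1)) := by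
  rw [thetaGraph, SimpleGraph.fromRel_adj]
  unfold vV
  split_ifs <;>
    refine ⟨?_, Or.inl ?_⟩ <;>
    simp [thetaRel, Fin.ext_iff] <;>
    first
    | exact False.elim ‹False›
    | omega

lemma adj_wV {i : ℕ} (hi : i < r) :
    (thetaGraph p q r).Adj (wV p q r i) (wV p q r (i + 1)) := by
  rw [thetaGraph, SimpleGraph.fromRel_adj]
  unfold wV
  split_ifs <;>
    refine ⟨?_, Or.inl ?_⟩ <;>
    simp [thetaRel, Fin.ext_iff] <;>
    first
    | exact False.elim ‹False›
    | omega

/-! Walks and distance bounds along the paths. -/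

lemma walk_uV (i : ℕ) : ∀ k, i + k ≤ p →
    ∃ W : (thetaGraph p q r).Walk (uV p q r i) (uV p q r (i + k)), W.length = k := by
  intro k
  induction k with
  | zero => exact fun _ => ⟨SimpleGraph.Walk.nil, rfl⟩
  | succ n ih =>
    intro h
    obtain ⟨W, hW⟩ := ih (by omega)
    exact ⟨W.append (adj_uV (by omega : i + n < p)).toWalk, by simp [hW]⟩

lemma walk_vV (i : ℕ) : ∀ k, i + k ≤ q →
    ∃ W : (thetaGraph p q r).Walk (vV p q r i) (vV p q r (i + k)), W.length = k := by
  intro k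
  induction k with
  | zero => exact fun _ => ⟨SimpleGraph.Walk.nil, rfl⟩
  | succ n ih =>
    intro h
    obtain ⟨W, hW⟩ := ih (by omega)
    exact ⟨W.append (adj_vV (by omega : i + n < q)).toWalk, by simp [hW]⟩

lemma walk_wV (i : ℕ) : ∀ k, i + k ≤ r →
    ∃ W : (thetaGraph p q r).Walk (wV p q r i) (wV p q r (i + k)), W.length = k := by
  intro k
  induction k with
  | zero => exact fun _ => ⟨SimpleGraph.Walk.nil, rfl⟩
  | succ n ih =>
    intro h
    obtain ⟨W, hW⟩ := ih (by omega)
    exact ⟨W.append (adj_wV (by omega : i + n < r)).toWalk, by simp [hW]⟩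

lemma dist_uV_le {i j : ℕ} (hij : i ≤ j) (hj : j ≤ p) :
    (thetaGraph p q r).dist (uV p q r i) (uV p q r j) ≤ j - i := by
  obtain ⟨W, hW⟩ := walk_uV (p := p) (q := q) (r := r) i (j - i) (by omega)
  have h := SimpleGraph.dist_le W
  rw [hW] at h
  rw [show i + (j - i) = j from by omega] at h
  exact h

lemma dist_vV_le {i j : ℕ} (hij : i ≤ j) (hj : j ≤ q) :
    (thetaGraph p q r).dist (vV p q r i) (vV p q r j) ≤ j - i := by
  obtain ⟨W, hW⟩ := walk_vV (p := p) (q := q) (r := r) i (j - i) (by omega)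
  have h := SimpleGraph.dist_le W
  rw [hW] at h
  rw [show i + (j - i) = j from by omega] at h
  exact h

lemma dist_wV_le {i j : ℕ} (hij : i ≤ j) (hj : j ≤ r) :
    (thetaGraph p q r).dist (wV p q r i) (wV p q r j) ≤ j - i := by
  obtain ⟨W, hW⟩ := walk_wV (p := p) (q := q) (r := r) i (j - i) (by omega)
  have h := SimpleGraph.dist_le W
  rw [hW] at h
  rw [show i + (j - i) = j from by omega] at h
  exact h

lemma reach_u (hp : 1 ≤ p) (hq : 1 ≤ q) (hr : 1 ≤ r) :
    ∀ x : ThetaVert p q r, (thetaGraph p q r).Reachable ThetaVert.u x := by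
  intro x
  rcases x with _ | _ | i | i | i
  · exact SimpleGraph.Reachable.refl _
  · obtain ⟨W, _⟩ := walk_uV (p := p) (q := q) (r := r) 0 p (by omega)
    rw [uV_zero, show (0 : ℕ) + p = p from by omega, uV_last hp] at W
    exact ⟨W⟩
  · have hi := i.isLt
    obtain ⟨W, _⟩ := walk_uV (p := p) (q := q) (r := r) 0 ((i : ℕ) + 1) (by omega)
    rw [uV_zero, show (0 : ℕ) + ((i : ℕ) + 1) = (i : ℕ) + 1 from by omega, uV_a] at W
    exact ⟨W⟩
  · have hi := i.isLt
    obtain ⟨W, _⟩ := walk_vV (p := p) (q := q) (r := r) 0 ((i : ℕ) + 1) (by omega)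
    rw [vV_zero, show (0 : ℕ) + ((i : ℕ) + 1) = (i : ℕ) + 1 from by omega, vV_b] at W
    exact ⟨W⟩
  · have hi := i.isLt
    obtain ⟨W, _⟩ := walk_wV (p := p) (q := q) (r := r) 0 ((i : ℕ) + 1) (by omega)
    rw [wV_zero, show (0 : ℕ) + ((i : ℕ) + 1) = (i : ℕ) + 1 from by omega, wV_c] at W
    exact ⟨W⟩

lemma theta_connected (hp : 1 ≤ p) (hq : 1 ≤ q) (hr : 1 ≤ r) :
    (thetaGraph p q r).Connected := by
  rw [SimpleGraph.connected_iff]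
  exact ⟨fun x y => (reach_u hp hq hr x).symm.trans (reach_u hp hq hr y), ⟨ThetaVert.u⟩⟩

/-! Upper bounds: `dist s x ≤ f s x`. -/

lemma dist_f1_le (h2 : 2 ≤ p) (h4 : p + 4 ≤ q) (hqr : q ≤ r) (x : ThetaVert p q r) :
    (thetaGraph p q r).dist (vV p q r 1) x ≤ f1 p q r x := by
  have hp : 1 ≤ p := by omega
  have hq : 1 ≤ q := by omega
  have hr : 1 ≤ r := by omega
  have hconn := theta_connected (p := p) (q := q) (r := r) hp hq hr
  have tri : ∀ a b c : ThetaVert p q r,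
      (thetaGraph p q r).dist a c ≤ (thetaGraph p q r).dist a b + (thetaGraph p q r).dist b c :=
    fun a b c => hconn.dist_triangle
  have hsu : (thetaGraph p q r).dist (vV p q r 1) ThetaVert.u ≤ 1 := by
    have h := dist_vV_le (p := p) (q := q) (r := r) (i := 0) (j := 1) (by omega) hq
    rw [vV_zero] at h
    rw [SimpleGraph.dist_comm]
    omega
  have huv : (thetaGraph p q r).dist ThetaVert.u ThetaVert.v ≤ p := by
    have h := dist_uV_le (p := p) (q := q) (r := r) (i := 0) (j := p) (by omega) le_rfl
    rw [uV_zero, uV_last hp] at h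
    omega
  have hsv : (thetaGraph p q r).dist (vV p q r 1) ThetaVert.v ≤ 1 + p := by
    have := tri (vV p q r 1) (ThetaVert.u) (ThetaVert.v)
    omega
  rcases x with _ | _ | i | i | i
  · simpa [f1] using hsu
  · simp only [f1]
    omega
  · have hi := i.isLt
    have hux : (thetaGraph p q r).dist ThetaVert.u (ThetaVert.a i) ≤ (i : ℕ) + 1 := by
      have h := dist_uV_le (p := p) (q := q) (r := r) (i := 0) (j := (i : ℕ) + 1)
        (by omega) (by omega)
      rw [uV_zero, uV_a] at h
      omega
    have := tri (vV p q r 1) (ThetaVert.u) (ThetaVert.a i)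
    simp only [f1]
    omega
  · have hi := i.isLt
    have h1 : (thetaGraph p q r).dist (vV p q r 1) (ThetaVert.b i) ≤ (i : ℕ) := by
      have h := dist_vV_le (p := p) (q := q) (r := r) (i := 1) (j := (i : ℕ) + 1)
        (by omega) (by omega)
      rw [vV_b] at h
      omega
    have hvx : (thetaGraph p q r).dist ThetaVert.v (ThetaVert.b i) ≤ q - ((i : ℕ) + 1) := by
      have h := dist_vV_le (p := p) (q := q) (r := r) (i := (i : ℕ) + 1) (j := q)
        (by omega) le_rfl
      rw [vV_b, vV_last hq] at h
      rw [SimpleGraph.dist_comm]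
      omega
    have := tri (vV p q r 1) (ThetaVert.v) (ThetaVert.b i)
    simp only [f1]
    omega
  · have hi := i.isLt
    have hux : (thetaGraph p q r).dist ThetaVert.u (ThetaVert.c i) ≤ (i : ℕ) + 1 := by
      have h := dist_wV_le (p := p) (q := q) (r := r) (i := 0) (j := (i : ℕ) + 1)
        (by omega) (by omega)
      rw [wV_zero, wV_c] at h
      omega
    have hvx : (thetaGraph p q r).dist ThetaVert.v (ThetaVert.c i) ≤ r - ((i : ℕ) + 1) := by
      have h := dist_wV_le (p := p) (q := q) (r := r) (i := (i : ℕ) + 1) (j := r)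
        (by omega) le_rfl
      rw [wV_c, wV_last hr] at h
      rw [SimpleGraph.dist_comm]
      omega
    have t1 := tri (vV p q r 1) (ThetaVert.u) (ThetaVert.c i)
    have t2 := tri (vV p q r 1) (ThetaVert.v) (ThetaVert.c i)
    simp only [f1]
    omega

lemma dist_f2_le (h2 : 2 ≤ p) (h4 : p + 4 ≤ q) (hqr : q ≤ r) (hre : r % 2 = 0)
    (x : ThetaVert p q r) :
    (thetaGraph p q r).dist (wV p q r (r / 2)) x ≤ f2 p q r x := by
  have hp : 1 ≤ p := by omega
  have hq : 1 ≤ q := by omega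
  have hr : 1 ≤ r := by omega
  have hconn := theta_connected (p := p) (q := q) (r := r) hp hq hr
  have tri : ∀ a b c : ThetaVert p q r,
      (thetaGraph p q r).dist a c ≤ (thetaGraph p q r).dist a b + (thetaGraph p q r).dist b c :=
    fun a b c => hconn.dist_triangle
  have hsu : (thetaGraph p q r).dist (wV p q r (r / 2)) ThetaVert.u ≤ r / 2 := by
    have h := dist_wV_le (p := p) (q := q) (r := r) (i := 0) (j := r / 2) (by omega) (by omega)
    rw [wV_zero] at h
    rw [SimpleGraph.dist_comm]
    omega
  have hsv : (thetaGraph p q r).dist (wV p q r (r / 2)) ThetaVert.v ≤ r - r / 2 := by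
    have h := dist_wV_le (p := p) (q := q) (r := r) (i := r / 2) (j := r) (by omega) le_rfl
    rw [wV_last hr] at h
    omega
  rcases x with _ | _ | i | i | i
  · simpa [f2] using hsu
  · simpa [f2] using hsv
  · have hi := i.isLt
    have hux : (thetaGraph p q r).dist ThetaVert.u (ThetaVert.a i) ≤ (i : ℕ) + 1 := by
      have h := dist_uV_le (p := p) (q := q) (r := r) (i := 0) (j := (i : ℕ) + 1)
        (by omega) (by omega)
      rw [uV_zero, uV_a] at h
      omega
    have hvx : (thetaGraph p q r).dist ThetaVert.v (ThetaVert.a i) ≤ p - ((i : ℕ) + 1) := by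
      have h := dist_uV_le (p := p) (q := q) (r := r) (i := (i : ℕ) + 1) (j := p)
        (by omega) le_rfl
      rw [uV_a, uV_last hp] at h
      rw [SimpleGraph.dist_comm]
      omega
    have t1 := tri (wV p q r (r / 2)) (ThetaVert.u) (ThetaVert.a i)
    have t2 := tri (wV p q r (r / 2)) (ThetaVert.v) (ThetaVert.a i)
    simp only [f2]
    omega
  · have hi := i.isLt
    have hux : (thetaGraph p q r).dist ThetaVert.u (ThetaVert.b i) ≤ (i : ℕ) + 1 := by
      have h := dist_vV_le (p := p) (q := q) (r := r) (i := 0) (j := (i : ℕ) + 1)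
        (by omega) (by omega)
      rw [vV_zero, vV_b] at h
      omega
    have hvx : (thetaGraph p q r).dist ThetaVert.v (ThetaVert.b i) ≤ q - ((i : ℕ) + 1) := by
      have h := dist_vV_le (p := p) (q := q) (r := r) (i := (i : ℕ) + 1) (j := q)
        (by omega) le_rfl
      rw [vV_b, vV_last hq] at h
      rw [SimpleGraph.dist_comm]
      omega
    have t1 := tri (wV p q r (r / 2)) (ThetaVert.u) (ThetaVert.b i)
    have t2 := tri (wV p q r (r / 2)) (ThetaVert.v) (ThetaVert.b i)
    simp only [f2]
    omega
  · have hi := i.isLt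
    rcases le_or_gt ((i : ℕ) + 1) (r / 2) with hle | hlt
    · have h := dist_wV_le (p := p) (q := q) (r := r) (i := (i : ℕ) + 1) (j := r / 2)
        hle (by omega)
      rw [wV_c] at h
      rw [SimpleGraph.dist_comm]
      simp only [f2]
      omega
    · have h := dist_wV_le (p := p) (q := q) (r := r) (i := r / 2) (j := (i : ℕ) + 1)
        (by omega) (by omega)
      rw [wV_c] at h
      simp only [f2]
      omega

/-! The distance identities. -/

lemma dist_eq_f1 (h2 : 2 ≤ p) (h4 : p + 4 ≤ q) (hqr : q ≤ r) (x : ThetaVert p q r) :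
    (thetaGraph p q r).dist (vV p q r 1) x = f1 p q r x := by
  have hp : 1 ≤ p := by omega
  have hq : 1 ≤ q := by omega
  have hr : 1 ≤ r := by omega
  refine le_antisymm (dist_f1_le h2 h4 hqr x) ?_
  have hs : vV p q r 1 = ThetaVert.b ⟨0, by omega⟩ := vV_b ⟨0, by omega⟩
  refine f_le_dist (lip_f1 h2 h4 hqr) ?_ ?_
  · rw [hs]; simp [f1]
  · exact ((reach_u hp hq hr (vV p q r 1)).symm.trans (reach_u hp hq hr x))

lemma dist_eq_f2 (h2 : 2 ≤ p) (h4 : p + 4 ≤ q) (hqr : q ≤ r) (hre : r % 2 = 0)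
    (x : ThetaVert p q r) :
    (thetaGraph p q r).dist (wV p q r (r / 2)) x = f2 p q r x := by
  have hp : 1 ≤ p := by omega
  have hq : 1 ≤ q := by omega
  have hr : 1 ≤ r := by omega
  refine le_antisymm (dist_f2_le h2 h4 hqr hre x) ?_
  have hs : wV p q r (r / 2) = ThetaVert.c ⟨r / 2 - 1, by omega⟩ := by
    have := wV_c (p := p) (q := q) (r := r) ⟨r / 2 - 1, by omega⟩
    rw [show ((⟨r / 2 - 1, by omega⟩ : Fin (r - 1)) : ℕ) + 1 = r / 2 from by simp; omega] at this
    exact this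
  refine f_le_dist (lip_f2 h2 h4 hqr) ?_ ?_
  · rw [hs]; simp [f2]; omega
  · exact ((reach_u hp hq hr (wV p q r (r / 2))).symm.trans (reach_u hp hq hr x))

/-! The pair `(f1, f2)` separates vertices. -/

lemma key (h2 : 2 ≤ p) (h4 : p + 4 ≤ q) (hqr : q ≤ r)
    (hpe : p % 2 = 0) (hqe : q % 2 = 0) (hre : r % 2 = 0) :
    ∀ x x' : ThetaVert p q r, x ≠ x' →
      f1 p q r x ≠ f1 p q r x' ∨ f2 p q r x ≠ f2 p q r x' := by
  intro x x' hne
  rcases x with _ | _ | ⟨i, hi⟩ | ⟨i, hi⟩ | ⟨i, hi⟩ <;>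
    rcases x' with _ | _ | ⟨j, hj⟩ | ⟨j, hj⟩ | ⟨j, hj⟩ <;>
    simp only [f1, f2, ne_eq, ThetaVert.a.injEq, ThetaVert.b.injEq, ThetaVert.c.injEq,
      Fin.mk.injEq, Fin.val_mk, not_true_eq_false, not_false_eq_true] at hne ⊢ <;>
    omega

end ThetaAux

/-- in `Θ_{p,q,r}` with `1 ≤ p ≤ q ≤ r`, `q ≥ 2`, all of `p`, `q`,
`r` even and `q ∉ {p, p+2}`, the set `{v₁, w_{r/2}}` is a vertex metric generator. -/
theorem isVertexGenerator_case_iii (p q r : ℕ)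
    (hp : 1 ≤ p) (hpq : p ≤ q) (hqr : q ≤ r) (hq2 : 2 ≤ q)
    (hpe : Even p) (hqe : Even q) (hre : Even r)
    (hq : q ≠ p ∧ q ≠ p + 2) :
    IsVertexMetricGenerator (thetaGraph p q r)
      {vV p q r 1, wV p q r (r / 2)} :=  by
  have h2 : 2 ≤ p := by
    rcases hpe with ⟨k, hk⟩
    omega
  have h4 : p + 4 ≤ q := by
    rcases hpe with ⟨k, hk⟩
    rcases hqe with ⟨m, hm⟩
    omega
  have hre' : r % 2 = 0 := by
    rcases hre with ⟨k, hk⟩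
    omega
  intro x x' hne
  rcases ThetaAux.key h2 h4 hqr (by rcases hpe with ⟨k, hk⟩; omega)
      (by rcases hqe with ⟨k, hk⟩; omega) hre' x x' hne with h | h
  · exact ⟨vV p q r 1, Or.inl rfl, by
      rw [ThetaAux.dist_eq_f1 h2 h4 hqr, ThetaAux.dist_eq_f1 h2 h4 hqr]; exact h⟩
  · exact ⟨wV p q r (r / 2), Or.inr rfl, by
      rw [ThetaAux.dist_eq_f2 h2 h4 hqr hre', ThetaAux.dist_eq_f2 h2 h4 hqr hre']; exact h⟩
end

section
/- Let G = Θ_{p,q,r} with p ≤ q ≤ r, where p, q and r are all even, q ∈ {p, p+2} and r ≥ p+4. Then the set S = {v_{q/2}, w₁} is a vertex metric generator of G. -/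
theorem dist_eq_potential {V : Type*} (G : SimpleGraph V) (f : V → ℕ) (s : V)
    (h0 : f s = 0) (huniq : ∀ x, f x = 0 → x = s)
    (hlip : ∀ x y, G.Adj x y → f x ≤ f y + 1)
    (hdesc : ∀ x, f x ≠ 0 → ∃ y, G.Adj x y ∧ f y < f x) (x : V) :
    G.dist s x = f x := by
  have key : ∀ n x, f x ≤ n → ∃ w : G.Walk s x, w.length ≤ f x := by
    intro n
    induction n with
    | zero =>
      intro x hx
      obtain rfl := huniq x (by omega)
      exact ⟨.nil, by simp⟩
    | succ n ih =>
      intro x hx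
      by_cases hx0 : f x = 0
      · obtain rfl := huniq x hx0; exact ⟨.nil, by simp⟩
      · obtain ⟨y, hadj, hlt⟩ := hdesc x hx0
        obtain ⟨w, hw⟩ := ih y (by omega)
        exact ⟨w.concat hadj.symm, by rw [SimpleGraph.Walk.length_concat]; omega⟩
  obtain ⟨w, hw⟩ := key (f x) x le_rfl
  have hub : G.dist s x ≤ f x := le_trans (SimpleGraph.dist_le w) hw
  have hreach : G.Reachable s x := ⟨w⟩
  obtain ⟨w', hw'⟩ := hreach.exists_walk_length_eq_dist
  have hlb : ∀ {a b : V} (ww : G.Walk a b), f b ≤ f a + ww.length := by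
    intro a b ww
    induction ww with
    | nil => omega
    | cons h w ih =>
      have := hlip _ _ h.symm
      simp only [SimpleGraph.Walk.length_cons]
      omega
  have := hlb w'
  omega
def f1 (p q r : ℕ) : ThetaVert p q r → ℕ
  | .u => q / 2
  | .v => q / 2
  | .a i => q / 2 + min ((i : ℕ) + 1) (p - ((i : ℕ) + 1))
  | .b j => Nat.dist (q / 2) ((j : ℕ) + 1)
  | .c k => q / 2 + min ((k : ℕ) + 1) (r - ((k : ℕ) + 1))

def f2 (p q r : ℕ) : ThetaVert p q r → ℕ
  | .u => 1
  | .v => p + 1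
  | .a i => (i : ℕ) + 2
  | .b j => min ((j : ℕ) + 2) (p + q - (j : ℕ))
  | .c k => min (k : ℕ) (p + r - (k : ℕ))

lemma lip1 (p q r : ℕ) (hp : 2 ≤ p) (hpq : p ≤ q) (hq : q = p ∨ q = p + 2)
    (hr : p + 4 ≤ r) (hqe : q % 2 = 0) :
    ∀ x y : ThetaVert p q r, thetaRel p q r x y →
      f1 p q r x ≤ f1 p q r y + 1 ∧ f1 p q r y ≤ f1 p q r x + 1 := by
  rintro (_|_|i|i|i) (_|_|j|j|j) h <;>
    simp only [thetaRel, f1, Nat.dist] at h ⊢ <;>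
    first
      | exact h.elim
      | omega
      | (have := i.isLt; omega)
      | (have := i.isLt; have := j.isLt; omega)

lemma lip2 (p q r : ℕ) (hp : 2 ≤ p) (hpq : p ≤ q) (hq : q = p ∨ q = p + 2)
    (hr : p + 4 ≤ r) (hqe : q % 2 = 0) :
    ∀ x y : ThetaVert p q r, thetaRel p q r x y →
      f2 p q r x ≤ f2 p q r y + 1 ∧ f2 p q r y ≤ f2 p q r x + 1 := by
  rintro (_|_|i|i|i) (_|_|j|j|j) h <;>
    simp only [thetaRel, f2] at h ⊢ <;>
    first
      | exact h.elim
      | omega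
      | (have := i.isLt; omega)
      | (have := i.isLt; have := j.isLt; omega)
lemma adj_of_rel {p q r : ℕ} {x y : ThetaVert p q r} (hne : x ≠ y)
    (h : thetaRel p q r x y ∨ thetaRel p q r y x) : (thetaGraph p q r).Adj x y := by
  rw [thetaGraph, SimpleGraph.fromRel_adj]
  exact ⟨hne, h⟩

lemma zero1 (p q r : ℕ) (hp : 2 ≤ p) (hpq : p ≤ q) (hq2 : 2 ≤ q) (hr : p + 4 ≤ r)
    (hqe : q % 2 = 0) :
    ∀ x : ThetaVert p q r, f1 p q r x = 0 → x = .b ⟨q / 2 - 1, by omega⟩ := by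
  rintro (_|_|i|i|i) h <;> simp only [f1, Nat.dist] at h <;>
    first
      | omega
      | (have := i.isLt; omega)
      | (simp only [ThetaVert.b.injEq, ← Fin.val_inj]; omega)

lemma zero2 (p q r : ℕ) (hp : 2 ≤ p) (hpq : p ≤ q) (hq2 : 2 ≤ q) (hr : p + 4 ≤ r) :
    ∀ x : ThetaVert p q r, f2 p q r x = 0 → x = .c ⟨0, by omega⟩ := by
  rintro (_|_|i|i|i) h <;> simp only [f2] at h <;>
    first
      | omega
      | (have := i.isLt; omega)
      | (simp only [ThetaVert.c.injEq, ← Fin.val_inj]; have := i.isLt; omega)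
lemma desc1 (p q r : ℕ) (hp : 2 ≤ p) (hpq : p ≤ q) (hq2 : 2 ≤ q) (hr : p + 4 ≤ r)
    (hqe : q % 2 = 0) :
    ∀ x : ThetaVert p q r, f1 p q r x ≠ 0 →
      ∃ y, (thetaGraph p q r).Adj x y ∧ f1 p q r y < f1 p q r x := by
  rintro (_|_|i|i|i) h
  · exact ⟨.b ⟨0, by omega⟩, adj_of_rel (by simp) (.inl (by simp [thetaRel])),
      by simp only [f1, Nat.dist]; omega⟩
  · exact ⟨.b ⟨q - 2, by omega⟩, adj_of_rel (by simp) (.inr (by simp [thetaRel])),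
      by simp only [f1, Nat.dist]; omega⟩
  · -- a i
    have hi := i.isLt
    by_cases h2 : 2 * ((i : ℕ) + 1) ≤ p
    · by_cases hi0 : (i : ℕ) = 0
      · exact ⟨.u, adj_of_rel (by simp) (.inr (by simp [thetaRel, hi0])),
          by simp only [f1]; omega⟩
      · exact ⟨.a ⟨(i : ℕ) - 1, by omega⟩, adj_of_rel
          (by simp [← Fin.val_inj]; omega)
          (.inr (by simp only [thetaRel]; omega)),
          by simp only [f1]; omega⟩
    · by_cases hip : (i : ℕ) = p - 2
      · exact ⟨.v, adj_of_rel (by simp) (.inl (by simp [thetaRel, hip])),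
          by simp only [f1]; omega⟩
      · exact ⟨.a ⟨(i : ℕ) + 1, by omega⟩, adj_of_rel
          (by simp [← Fin.val_inj])
          (.inl (by simp only [thetaRel])),
          by simp only [f1]; omega⟩
  · -- b i
    have hi := i.isLt
    have hne : (i : ℕ) + 1 ≠ q / 2 := by
      simp only [f1, Nat.dist] at h; omega
    by_cases h2 : (i : ℕ) + 1 < q / 2
    · exact ⟨.b ⟨(i : ℕ) + 1, by omega⟩, adj_of_rel
        (by simp [← Fin.val_inj])
        (.inl (by simp only [thetaRel])),
        by simp only [f1, Nat.dist]; omega⟩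
    · exact ⟨.b ⟨(i : ℕ) - 1, by omega⟩, adj_of_rel
        (by simp [← Fin.val_inj]; omega)
        (.inr (by simp only [thetaRel]; omega)),
        by simp only [f1, Nat.dist]; omega⟩
  · -- c i
    have hi := i.isLt
    by_cases h2 : 2 * ((i : ℕ) + 1) ≤ r
    · by_cases hi0 : (i : ℕ) = 0
      · exact ⟨.u, adj_of_rel (by simp) (.inr (by simp [thetaRel, hi0])),
          by simp only [f1]; omega⟩
      · exact ⟨.c ⟨(i : ℕ) - 1, by omega⟩, adj_of_rel
          (by simp [← Fin.val_inj]; omega)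
          (.inr (by simp only [thetaRel]; omega)),
          by simp only [f1]; omega⟩
    · by_cases hip : (i : ℕ) = r - 2
      · exact ⟨.v, adj_of_rel (by simp) (.inl (by simp [thetaRel, hip])),
          by simp only [f1]; omega⟩
      · exact ⟨.c ⟨(i : ℕ) + 1, by omega⟩, adj_of_rel
          (by simp [← Fin.val_inj])
          (.inl (by simp only [thetaRel])),
          by simp only [f1]; omega⟩

lemma desc2 (p q r : ℕ) (hp : 2 ≤ p) (hpq : p ≤ q) (hqle : q ≤ p + 2) (hq2 : 2 ≤ q)
    (hr : p + 4 ≤ r) :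
    ∀ x : ThetaVert p q r, f2 p q r x ≠ 0 →
      ∃ y, (thetaGraph p q r).Adj x y ∧ f2 p q r y < f2 p q r x := by
  rintro (_|_|i|i|i) h
  · exact ⟨.c ⟨0, by omega⟩, adj_of_rel (by simp) (.inl (by simp [thetaRel])),
      by simp only [f2]; omega⟩
  · exact ⟨.a ⟨p - 2, by omega⟩, adj_of_rel (by simp) (.inr (by simp [thetaRel])),
      by simp only [f2]; omega⟩
  · -- a i
    have hi := i.isLt
    by_cases hi0 : (i : ℕ) = 0
    · exact ⟨.u, adj_of_rel (by simp) (.inr (by simp [thetaRel, hi0])),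
        by simp only [f2]; omega⟩
    · exact ⟨.a ⟨(i : ℕ) - 1, by omega⟩, adj_of_rel
        (by simp [← Fin.val_inj]; omega)
        (.inr (by simp only [thetaRel]; omega)),
        by simp only [f2]; omega⟩
  · -- b i
    have hi := i.isLt
    by_cases hi0 : (i : ℕ) = 0
    · exact ⟨.u, adj_of_rel (by simp) (.inr (by simp [thetaRel, hi0])),
        by simp only [f2]; omega⟩
    · exact ⟨.b ⟨(i : ℕ) - 1, by omega⟩, adj_of_rel
        (by simp [← Fin.val_inj]; omega)
        (.inr (by simp only [thetaRel]; omega)),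
        by simp only [f2]; omega⟩
  · -- c i
    have hi := i.isLt
    have hk : 1 ≤ (i : ℕ) := by simp only [f2] at h; omega
    by_cases h2 : 2 * (i : ℕ) ≤ p + r
    · exact ⟨.c ⟨(i : ℕ) - 1, by omega⟩, adj_of_rel
        (by simp [← Fin.val_inj]; omega)
        (.inr (by simp only [thetaRel]; omega)),
        by simp only [f2]; omega⟩
    · by_cases hip : (i : ℕ) = r - 2
      · exact ⟨.v, adj_of_rel (by simp) (.inl (by simp [thetaRel, hip])),
          by simp only [f2]; omega⟩
      · exact ⟨.c ⟨(i : ℕ) + 1, by omega⟩, adj_of_rel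
          (by simp [← Fin.val_inj])
          (.inl (by simp only [thetaRel])),
          by simp only [f2]; omega⟩
lemma inj12 (p q r : ℕ) (hp : 2 ≤ p) (hpq : p ≤ q) (hqle : q ≤ p + 2) (hq2 : 2 ≤ q)
    (hr : p + 4 ≤ r) (hqe : q % 2 = 0) :
    ∀ x x' : ThetaVert p q r, x ≠ x' → f1 p q r x = f1 p q r x' →
      f2 p q r x ≠ f2 p q r x' := by
  rintro (_|_|i|i|i) (_|_|j|j|j) hne h1 <;>
    simp only [f1, f2, Nat.dist] at h1 ⊢ <;>
    first
      | exact absurd rfl hne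
      | omega
      | (have := i.isLt; omega)
      | (have := j.isLt; omega)
      | (have hv : (i : ℕ) ≠ (j : ℕ) := by
          intro hh; exact hne (by simp [← Fin.val_inj, hh])
         have := i.isLt; have := j.isLt; omega)
/-- in `Θ_{p,q,r}` with `1 ≤ p ≤ q ≤ r`, `q ≥ 2`, all of `p`, `q`,
`r` even, `q ∈ {p, p+2}` and `r ≥ p+4`, the set `{v_{q/2}, w₁}` is a vertex
metric generator. -/
theorem isVertexGenerator_case_iv (p q r : ℕ)
    (hp : 1 ≤ p) (hpq : p ≤ q) (hqr : q ≤ r) (hq2 : 2 ≤ q)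
    (hpe : Even p) (hqe : Even q) (hre : Even r)
    (hq : q = p ∨ q = p + 2) (hr : p + 4 ≤ r) :
    IsVertexMetricGenerator (thetaGraph p q r)
      {vV p q r (q / 2), wV p q r 1} := by
  rw [Nat.even_iff] at hpe hqe hre
  have hp2 : 2 ≤ p := by omega
  have hqle : q ≤ p + 2 := by omega
  have hs1 : vV p q r (q / 2) = ThetaVert.b ⟨q / 2 - 1, by omega⟩ := by
    rw [vV, dif_pos (by omega)]
  have hs2 : wV p q r 1 = ThetaVert.c ⟨0, by omega⟩ := by
    rw [wV, dif_pos (by omega)]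
  have hlip1 : ∀ x y, (thetaGraph p q r).Adj x y → f1 p q r x ≤ f1 p q r y + 1 := by
    intro x y hxy
    rw [thetaGraph, SimpleGraph.fromRel_adj] at hxy
    rcases hxy.2 with h | h
    · exact (lip1 p q r hp2 hpq hq hr hqe x y h).1
    · exact (lip1 p q r hp2 hpq hq hr hqe y x h).2
  have hlip2 : ∀ x y, (thetaGraph p q r).Adj x y → f2 p q r x ≤ f2 p q r y + 1 := by
    intro x y hxy
    rw [thetaGraph, SimpleGraph.fromRel_adj] at hxy
    rcases hxy.2 with h | h
    · exact (lip2 p q r hp2 hpq hq hr hqe x y h).1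
    · exact (lip2 p q r hp2 hpq hq hr hqe y x h).2
  have hd1 : ∀ x, (thetaGraph p q r).dist (vV p q r (q / 2)) x = f1 p q r x := by
    rw [hs1]
    exact dist_eq_potential _ _ _ (by simp [f1, Nat.dist]; omega)
      (zero1 p q r hp2 hpq hq2 hr hqe) hlip1 (desc1 p q r hp2 hpq hq2 hr hqe)
  have hd2 : ∀ x, (thetaGraph p q r).dist (wV p q r 1) x = f2 p q r x := by
    rw [hs2]
    exact dist_eq_potential _ _ _ (by simp [f2])
      (zero2 p q r hp2 hpq hq2 hr) hlip2 (desc2 p q r hp2 hpq hqle hq2 hr)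
  intro x x' hne
  by_cases h1 : f1 p q r x = f1 p q r x'
  · exact ⟨wV p q r 1, Or.inr rfl, by
      rw [hd2, hd2]
      exact inj12 p q r hp2 hpq hqle hq2 hr hqe x x' hne h1⟩
  · exact ⟨vV p q r (q / 2), Or.inl rfl, by rw [hd1, hd1]; exact h1⟩
end

section
/- Let G = Θ_{p,q,r} with p ≤ q ≤ r, where p, q and r are all even and q = r = p+2. Then the set S = {v₁, w₁} is a vertex metric generator of G. -/
section Aux

variable {V : Type*} {G : SimpleGraph V}

lemma walk_le_f (f : V → ℕ) (hstep : ∀ x y, G.Adj x y → f y ≤ f x + 1) :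
    ∀ {a b : V} (w : G.Walk a b), f b ≤ f a + w.length := by
  intro a b w
  induction w with
  | nil => simp
  | @cons u v b h w ih =>
    have h1 : f v ≤ f u + 1 := hstep _ _ h
    simp only [SimpleGraph.Walk.length_cons]
    omega

lemma exists_walk_of_f (f : V → ℕ) (s : V) (h0 : ∀ x, f x = 0 → x = s)
    (hdec : ∀ x, f x ≠ 0 → ∃ y, G.Adj y x ∧ f y + 1 = f x) :
    ∀ n (x : V), f x = n → ∃ w : G.Walk s x, w.length = n := by
  intro n
  induction n with
  | zero =>
    intro x hx
    obtain rfl := h0 x hx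
    exact ⟨.nil, rfl⟩
  | succ n ih =>
    intro x hx
    obtain ⟨y, hadj, hy⟩ := hdec x (by omega)
    obtain ⟨w, hw⟩ := ih y (by omega)
    exact ⟨w.concat hadj, by simp [hw]⟩

lemma dist_eq_f (f : V → ℕ) (s : V) (h0 : ∀ x, f x = 0 → x = s)
    (hstep : ∀ x y, G.Adj x y → f y ≤ f x + 1)
    (hdec : ∀ x, f x ≠ 0 → ∃ y, G.Adj y x ∧ f y + 1 = f x)
    (hs : f s = 0) (x : V) : G.dist s x = f x := by
  obtain ⟨w, hw⟩ := exists_walk_of_f f s h0 hdec (f x) x rfl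
  have h1 : G.dist s x ≤ f x := hw ▸ SimpleGraph.dist_le w
  have hreach : G.Reachable s x := ⟨w⟩
  obtain ⟨w', hw'⟩ := hreach.exists_walk_length_eq_dist
  have h2 := walk_le_f f hstep w'
  omega

end Aux

/-- distance function from `v₁ = b 0` in `Θ_{p,p+2,p+2}`. -/
def fB (p q r : ℕ) : ThetaVert p q r → ℕ
  | .u => 1
  | .v => p + 1
  | .a i => (i : ℕ) + 2
  | .b j => (j : ℕ)
  | .c k => (k : ℕ) + 2

/-- distance function from `w₁ = c 0` in `Θ_{p,p+2,p+2}`. -/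
def fC (p q r : ℕ) : ThetaVert p q r → ℕ
  | .u => 1
  | .v => p + 1
  | .a i => (i : ℕ) + 2
  | .b j => (j : ℕ) + 2
  | .c k => (k : ℕ)

lemma theta_adj_iff {p q r : ℕ} (x y : ThetaVert p q r) :
    (thetaGraph p q r).Adj x y ↔ x ≠ y ∧ (thetaRel p q r x y ∨ thetaRel p q r y x) := by
  rfl

lemma distB {p q r : ℕ} (hp2 : 2 ≤ p) (hq : q = p + 2) (hr : r = p + 2)
    (x : ThetaVert p q r) :
    (thetaGraph p q r).dist (ThetaVert.b ⟨0, by omega⟩) x = fB p q r x := by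
  apply dist_eq_f
  · intro x hx
    cases x with
    | u => simp [fB] at hx
    | v => simp only [fB] at hx; omega
    | a i => simp [fB] at hx
    | b j => simp only [fB] at hx; congr 1; exact Fin.ext hx
    | c k => simp [fB] at hx
  · intro x y hxy
    rw [theta_adj_iff] at hxy
    obtain ⟨hne, h⟩ := hxy
    cases x <;> cases y <;> simp only [thetaRel, fB, or_false, false_or] at h ⊢ <;>
      first
        | omega
        | exact h.elim
        | (obtain h | h := h <;> omega)
  · intro x hx
    cases x with
    | u =>
      refine ⟨.b ⟨0, by omega⟩, ?_, by simp [fB]⟩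
      rw [theta_adj_iff]
      exact ⟨by simp, Or.inr rfl⟩
    | v =>
      refine ⟨.b ⟨q - 2, by omega⟩, ?_, by simp [fB]; omega⟩
      rw [theta_adj_iff]
      exact ⟨by simp, Or.inl rfl⟩
    | a i =>
      by_cases h0 : (i : ℕ) = 0
      · refine ⟨.u, ?_, by simp [fB, h0]⟩
        rw [theta_adj_iff]
        exact ⟨by simp, Or.inl h0⟩
      · have hlt := i.isLt
        refine ⟨.a ⟨(i : ℕ) - 1, by omega⟩, ?_, by simp [fB]; omega⟩
        rw [theta_adj_iff]
        refine ⟨?_, Or.inl (by simp only [thetaRel, Fin.val_mk]; omega)⟩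
        simp only [ne_eq, ThetaVert.a.injEq, Fin.ext_iff]
        omega
    | b j =>
      have h0 : (j : ℕ) ≠ 0 := by simpa [fB] using hx
      have hlt := j.isLt
      refine ⟨.b ⟨(j : ℕ) - 1, by omega⟩, ?_, by simp [fB]; omega⟩
      rw [theta_adj_iff]
      refine ⟨?_, Or.inl (by simp only [thetaRel, Fin.val_mk]; omega)⟩
      simp only [ne_eq, ThetaVert.b.injEq, Fin.ext_iff]
      omega
    | c k =>
      by_cases h0 : (k : ℕ) = 0
      · refine ⟨.u, ?_, by simp [fB, h0]⟩
        rw [theta_adj_iff]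
        exact ⟨by simp, Or.inl h0⟩
      · have hlt := k.isLt
        refine ⟨.c ⟨(k : ℕ) - 1, by omega⟩, ?_, by simp [fB]; omega⟩
        rw [theta_adj_iff]
        refine ⟨?_, Or.inl (by simp only [thetaRel, Fin.val_mk]; omega)⟩
        simp only [ne_eq, ThetaVert.c.injEq, Fin.ext_iff]
        omega
  · simp [fB]

lemma distC {p q r : ℕ} (hp2 : 2 ≤ p) (hq : q = p + 2) (hr : r = p + 2)
    (x : ThetaVert p q r) :
    (thetaGraph p q r).dist (ThetaVert.c ⟨0, by omega⟩) x = fC p q r x := by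
  apply dist_eq_f
  · intro x hx
    cases x with
    | u => simp [fC] at hx
    | v => simp only [fC] at hx; omega
    | a i => simp [fC] at hx
    | b j => simp [fC] at hx
    | c k => simp only [fC] at hx; congr 1; exact Fin.ext hx
  · intro x y hxy
    rw [theta_adj_iff] at hxy
    obtain ⟨hne, h⟩ := hxy
    cases x <;> cases y <;> simp only [thetaRel, fC, or_false, false_or] at h ⊢ <;>
      first
        | omega
        | exact h.elim
        | (obtain h | h := h <;> omega)
  · intro x hx
    cases x with
    | u =>
      refine ⟨.c ⟨0, by omega⟩, ?_, by simp [fC]⟩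
      rw [theta_adj_iff]
      exact ⟨by simp, Or.inr rfl⟩
    | v =>
      refine ⟨.c ⟨r - 2, by omega⟩, ?_, by simp [fC]; omega⟩
      rw [theta_adj_iff]
      exact ⟨by simp, Or.inl rfl⟩
    | a i =>
      by_cases h0 : (i : ℕ) = 0
      · refine ⟨.u, ?_, by simp [fC, h0]⟩
        rw [theta_adj_iff]
        exact ⟨by simp, Or.inl h0⟩
      · have hlt := i.isLt
        refine ⟨.a ⟨(i : ℕ) - 1, by omega⟩, ?_, by simp [fC]; omega⟩
        rw [theta_adj_iff]
        refine ⟨?_, Or.inl (by simp only [thetaRel, Fin.val_mk]; omega)⟩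
        simp only [ne_eq, ThetaVert.a.injEq, Fin.ext_iff]
        omega
    | b j =>
      by_cases h0 : (j : ℕ) = 0
      · refine ⟨.u, ?_, by simp [fC, h0]⟩
        rw [theta_adj_iff]
        exact ⟨by simp, Or.inl h0⟩
      · have hlt := j.isLt
        refine ⟨.b ⟨(j : ℕ) - 1, by omega⟩, ?_, by simp [fC]; omega⟩
        rw [theta_adj_iff]
        refine ⟨?_, Or.inl (by simp only [thetaRel, Fin.val_mk]; omega)⟩
        simp only [ne_eq, ThetaVert.b.injEq, Fin.ext_iff]
        omega
    | c k =>
      have h0 : (k : ℕ) ≠ 0 := by simpa [fC] using hx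
      have hlt := k.isLt
      refine ⟨.c ⟨(k : ℕ) - 1, by omega⟩, ?_, by simp [fC]; omega⟩
      rw [theta_adj_iff]
      refine ⟨?_, Or.inl (by simp only [thetaRel, Fin.val_mk]; omega)⟩
      simp only [ne_eq, ThetaVert.c.injEq, Fin.ext_iff]
      omega
  · simp [fC]

/-- in `Θ_{p,q,r}` with `1 ≤ p ≤ q ≤ r`, `q ≥ 2`, all of `p`, `q`,
`r` even and `q = r = p+2`, the set `{v₁, w₁}` is a vertex metric generator. -/
theorem isVertexGenerator_case_v (p q r : ℕ)
    (hp : 1 ≤ p) (hpq : p ≤ q) (hqr : q ≤ r) (hq2 : 2 ≤ q)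
    (hpe : Even p) (hqe : Even q) (hre : Even r)
    (hq : q = p + 2) (hr : r = p + 2) :
    IsVertexMetricGenerator (thetaGraph p q r)
      {vV p q r 1, wV p q r 1} := by
  have hp2 : 2 ≤ p := by
    rcases hpe with ⟨m, hm⟩; omega
  have hv1 : vV p q r 1 = ThetaVert.b ⟨0, by omega⟩ := by
    simp only [vV]
    rw [dif_pos (by omega : 0 < 1 ∧ 1 < q)]
  have hw1 : wV p q r 1 = ThetaVert.c ⟨0, by omega⟩ := by
    simp only [wV]
    rw [dif_pos (by omega : 0 < 1 ∧ 1 < r)]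
  intro x x' hne
  have key : fB p q r x ≠ fB p q r x' ∨ fC p q r x ≠ fC p q r x' := by
    rcases x with _ | _ | ⟨i,hi⟩ | ⟨j,hj⟩ | ⟨k,hk⟩ <;> rcases x' with _ | _ | ⟨i',hi'⟩ | ⟨j',hj'⟩ | ⟨k',hk'⟩ <;>
      simp_all only [fB, fC, ne_eq, ThetaVert.a.injEq, ThetaVert.b.injEq,
        ThetaVert.c.injEq, Fin.ext_iff, not_true_eq_false, not_false_eq_true] <;>
      omega
  rcases key with h | h
  · refine ⟨vV p q r 1, Set.mem_insert _ _, ?_⟩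
    rw [hv1, distB hp2 hq hr, distB hp2 hq hr]
    exact h
  · refine ⟨wV p q r 1, Set.mem_insert_of_mem _ rfl, ?_⟩
    rw [hw1, distC hp2 hq hr, distC hp2 hq hr]
    exact h
end
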